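/- For the α-Rényi divergence with α > 1 between two Gaussians with equal covariance: D_α(N(μ₁, Σ) ‖ N(μ₂, Σ)) = (α/2)(μ₁ − μ₂)ᵀ Σ⁻¹ (μ₁ − μ₂). -/

import Mathlib

/-!
The density ratio `(p₁ / p₂) ^ α * p₂` of two Gaussians with common covariance `S` is again a
Gaussian density, now centred at `μ₂ + α (μ₁ - μ₂)`, times the constant
`exp (α (α - 1) / 2 · (μ₁ - μ₂)ᵀ S⁻¹ (μ₁ - μ₂))`: this is completing the square in the exponent.
Since a Gaussian density has total mass one (by the substitution `x = √S y`, which reduces it to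
a product of one-dimensional Gaussian integrals), the integral equals that constant, and its
logarithm divided by `α - 1` is the claimed value.
-/

open MeasureTheory Matrix Real

noncomputable def gaussPDF (d : ℕ) (S : Matrix (Fin d) (Fin d) ℝ)
    (μ : Fin d → ℝ) (x : Fin d → ℝ) : ℝ :=
  (Real.sqrt ((2 * Real.pi) ^ d * S.det))⁻¹ *
    Real.exp (-(1 / 2) * ((x - μ) ⬝ᵥ (S⁻¹ *ᵥ (x - μ))))

theorem dotProduct_mulVec_sub_lineMap {R ι : Type*} [CommRing R] [Fintype ι]
    (A : Matrix ι ι R) (x μ₁ μ₂ : ι → R) (α : R) :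
    α * ((x - μ₁) ⬝ᵥ (A *ᵥ (x - μ₁))) + (1 - α) * ((x - μ₂) ⬝ᵥ (A *ᵥ (x - μ₂))) =
      (x - AffineMap.lineMap μ₂ μ₁ α) ⬝ᵥ (A *ᵥ (x - AffineMap.lineMap μ₂ μ₁ α)) +
        α * (1 - α) * ((μ₁ - μ₂) ⬝ᵥ (A *ᵥ (μ₁ - μ₂))) := by
  simp only [AffineMap.lineMap_apply_module', mulVec_sub, mulVec_add, mulVec_smul,
    dotProduct_sub, dotProduct_add, dotProduct_smul, sub_dotProduct, add_dotProduct,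
    smul_dotProduct, smul_eq_mul]
  ring

theorem rpow_div_mul_exp {c : ℝ} (hc : c ≠ 0) (u v α : ℝ) :
    (c * exp u / (c * exp v)) ^ α * (c * exp v) = c * exp (α * u + (1 - α) * v) := by
  rw [mul_div_mul_left _ _ hc, ← exp_sub, ← exp_mul, mul_left_comm, ← exp_add]
  ring_nf

theorem gaussPDF_rpow_div_mul {d : ℕ} {S : Matrix (Fin d) (Fin d) ℝ} (hS : 0 < S.det)
    (μ₁ μ₂ : Fin d → ℝ) (α : ℝ) (x : Fin d → ℝ) :
    (gaussPDF d S μ₁ x / gaussPDF d S μ₂ x) ^ α * gaussPDF d S μ₂ x =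
      exp (α * (α - 1) / 2 * ((μ₁ - μ₂) ⬝ᵥ (S⁻¹ *ᵥ (μ₁ - μ₂)))) *
        gaussPDF d S (AffineMap.lineMap μ₂ μ₁ α) x := by
  have hc : (√((2 * π) ^ d * S.det))⁻¹ ≠ 0 := by positivity
  rw [gaussPDF, gaussPDF, rpow_div_mul_exp hc, gaussPDF, mul_left_comm (exp _), ← exp_add]
  congr 2
  linear_combination (-(1 / 2 : ℝ)) * dotProduct_mulVec_sub_lineMap S⁻¹ x μ₁ μ₂ α

theorem integral_comp_mulVec {ι : Type*} [Fintype ι] [DecidableEq ι] {B : Matrix ι ι ℝ}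
    (hB : B.det ≠ 0) (g : (ι → ℝ) → ℝ) :
    ∫ x, g (B *ᵥ x) = |B.det|⁻¹ * ∫ x, g x := by
  have hB' : LinearMap.det (toLin' B) ≠ 0 := by rwa [LinearMap.det_toLin']
  let e : (ι → ℝ) ≃ᵐ (ι → ℝ) :=
    ((toLin' B).equivOfDetNeZero hB').toContinuousLinearEquiv.toHomeomorph.toMeasurableEquiv
  have he : ⇑e = ⇑(toLin' B) := rfl
  calc ∫ x, g (B *ᵥ x) = ∫ y, g y ∂(Measure.map e volume) := by
        rw [integral_map_equiv, he]; simp only [toLin'_apply]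
    _ = |B.det|⁻¹ * ∫ x, g x := by
        rw [he, Real.map_matrix_volume_pi_eq_smul_volume_pi hB, integral_smul_measure,
          ENNReal.toReal_ofReal (by positivity), abs_inv, smul_eq_mul]

theorem integral_exp_neg_half_dotProduct_self (ι : Type*) [Fintype ι] :
    ∫ x : ι → ℝ, exp (-(1 / 2) * (x ⬝ᵥ x)) = √(2 * π) ^ Fintype.card ι := by
  have hprod (x : ι → ℝ) : exp (-(1 / 2) * (x ⬝ᵥ x)) = ∏ i, exp (-(1 / 2) * x i ^ 2) := by
    rw [← exp_sum, dotProduct, Finset.mul_sum]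
    simp only [sq]
  simp_rw [hprod]
  rw [integral_fintype_prod_volume_eq_pow (fun t : ℝ ↦ exp (-(1 / 2) * t ^ 2)),
    integral_gaussian, show π / (1 / 2) = 2 * π by ring]

theorem Matrix.PosDef.exists_symm_sq_eq {ι : Type*} [Fintype ι] [DecidableEq ι]
    {S : Matrix ι ι ℝ} (hS : S.PosDef) : ∃ B : Matrix ι ι ℝ, Bᵀ = B ∧ B * B = S := by
  open scoped MatrixOrder in
  refine ⟨CFC.sqrt S, ?_, CFC.sqrt_mul_sqrt_self S hS.posSemidef.nonneg⟩
  simpa [IsHermitian, conjTranspose_eq_transpose_of_trivial] using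
    (CFC.sqrt_nonneg S).posSemidef.isHermitian

theorem integral_exp_neg_half_dotProduct_inv_mulVec {ι : Type*} [Fintype ι] [DecidableEq ι]
    {S : Matrix ι ι ℝ} (hS : S.PosDef) :
    ∫ x, exp (-(1 / 2) * (x ⬝ᵥ (S⁻¹ *ᵥ x))) = √((2 * π) ^ Fintype.card ι * S.det) := by
  obtain ⟨B, hBsymm, hBB⟩ := hS.exists_symm_sq_eq
  have hdet : B.det * B.det = S.det := by rw [← det_mul, hBB]
  have hB : IsUnit B.det := isUnit_of_mul_isUnit_left (hdet ▸ hS.det_pos.ne'.isUnit)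
  have hinv : S⁻¹ * B = B⁻¹ := by
    rw [← hBB, Matrix.mul_inv_rev, Matrix.mul_assoc, nonsing_inv_mul _ hB, Matrix.mul_one]
  have hquad (x : ι → ℝ) : (B *ᵥ x) ⬝ᵥ (S⁻¹ *ᵥ (B *ᵥ x)) = x ⬝ᵥ x := by
    rw [mulVec_mulVec, hinv, dotProduct_comm, dotProduct_mulVec, ← mulVec_transpose, hBsymm,
      mulVec_mulVec, mul_nonsing_inv _ hB, one_mulVec]
  calc ∫ x, exp (-(1 / 2) * (x ⬝ᵥ (S⁻¹ *ᵥ x)))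
      = |B.det| * ∫ x, exp (-(1 / 2) * ((B *ᵥ x) ⬝ᵥ (S⁻¹ *ᵥ (B *ᵥ x)))) := by
        rw [integral_comp_mulVec hB.ne_zero (fun y ↦ exp (-(1 / 2) * (y ⬝ᵥ (S⁻¹ *ᵥ y)))),
          mul_inv_cancel_left₀ (abs_ne_zero.mpr hB.ne_zero)]
    _ = √((2 * π) ^ Fintype.card ι * S.det) := by
        simp only [hquad]
        have hpow : √((2 * π) ^ Fintype.card ι) = √(2 * π) ^ Fintype.card ι := by
          rw [sqrt_eq_iff_mul_self_eq_of_pos (by positivity), ← mul_pow,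
            mul_self_sqrt (by positivity)]
        rw [integral_exp_neg_half_dotProduct_self, sqrt_mul (by positivity) S.det, hpow, ← hdet,
          sqrt_mul_self_eq_abs, mul_comm]

theorem integral_gaussPDF {d : ℕ} {S : Matrix (Fin d) (Fin d) ℝ} (hS : S.PosDef)
    (μ : Fin d → ℝ) : ∫ x, gaussPDF d S μ x = 1 := by
  have hpos : 0 < √((2 * π) ^ d * S.det) := by
    have := hS.det_pos
    positivity
  simp only [gaussPDF]
  rw [integral_const_mul,
    integral_sub_right_eq_self (fun x ↦ exp (-(1 / 2) * (x ⬝ᵥ (S⁻¹ *ᵥ x)))),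
    integral_exp_neg_half_dotProduct_inv_mulVec hS, Fintype.card_fin, inv_mul_cancel₀ hpos.ne']

theorem renyi_gaussians_same_cov_general (d : ℕ) (S : Matrix (Fin d) (Fin d) ℝ)
    (hS : S.PosDef) (μ₁ μ₂ : Fin d → ℝ)
    (α : ℝ) (hα : 1 < α) :
    (1 / (α - 1)) *
        Real.log (∫ x : Fin d → ℝ,
          (gaussPDF d S μ₁ x / gaussPDF d S μ₂ x) ^ α * gaussPDF d S μ₂ x) =
      (α / 2) * ((μ₁ - μ₂) ⬝ᵥ (S⁻¹ *ᵥ (μ₁ - μ₂))) := by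
  simp_rw [gaussPDF_rpow_div_mul hS.det_pos]
  rw [integral_const_mul, integral_gaussPDF hS, mul_one, log_exp]
  field_simp [(sub_pos.mpr hα).ne']

/-- α-Rényi divergence between Gaussians with equal covariance. -/
theorem renyi_gaussians_same_cov (d : ℕ) (S : Matrix (Fin d) (Fin d) ℝ)
    (hS : S.PosDef) (hSsymm : S.IsSymm) (μ₁ μ₂ : Fin d → ℝ)
    (α : ℝ) (hα : 1 < α) :
    (1 / (α - 1)) *
        Real.log (∫ x : Fin d → ℝ,
          (gaussPDF d S μ₁ x / gaussPDF d S μ₂ x) ^ α * gaussPDF d S μ₂ x) =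
      (α / 2) * ((μ₁ - μ₂) ⬝ᵥ (S⁻¹ *ᵥ (μ₁ - μ₂))) :=
  renyi_gaussians_same_cov_general d S hS μ₁ μ₂ α hα
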